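/- For every μ ∈ R^1, every k ∈ ℕ and every φ ∈ R^k: (i) π_d(μ ∘ φ) = 0 unless d ∈ {k−1, k, k+1}; (ii) π_{k+1}(μ ∘ φ) = μ · φ; and (iii) the component Λ_μ(φ) := π_{k−1}(μ ∘ φ) satisfies ⟨Λ_μ(φ), ψ⟩ = ⟨φ, σ(μ) · ψ⟩ for every ψ ∈ R^{k−1}. In particular μ ∘ φ = μ · φ + π_k(μ ∘ φ) + Λ_μ(φ), a three-term sum, where Λ_μ is the adjoint of multiplication by σ(μ). -/

import Mathlib

/-!
The filtration bound puts `μ ∘ φ` in degrees `≤ k + 1`, and the top component is `μ · φ`.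
Pairing `π d (μ ∘ φ)` with `ψ ∈ R^d` and moving `μ` across the form gives
`⟨φ, π k (ψ ∘ σ μ)⟩`, which vanishes by the filtration bound when `d + 1 < k`, so
nondegeneracy kills those components; when `d + 1 = k` the inner component is the top term
`ψ · σ μ`, which identifies `Λ_μ` as the adjoint of multiplication by `σ μ`.
-/

/-- A graded complex vector space `R = ⊕_{d ∈ ℕ} R^d` (encoded by the projections
`π d`) with: an associative unital ℂ-bilinear product `mul` (the specialized star
product `∘`) satisfying the filtration bound; a Hermitian form `B` for which the
grading is orthogonal and which is nondegenerate on each graded piece; a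
conjugate-linear grading-preserving involution `σ` satisfying the adjoint relation
`B (φ ∘ a) b = B a (b ∘ σ φ)`; and a commutative graded ℂ-algebra product `cmul`
which is the top-order term of `∘`: `π (j+k) (φ ∘ ψ) = φ · ψ` for `φ ∈ R^j`,
`ψ ∈ R^k`. -/
structure GradedStarAlgebra (R : Type*) [AddCommGroup R] [Module ℂ R] where
  π : ℕ → Module.End ℂ R
  π_idem : ∀ (d : ℕ) (v : R), π d (π d v) = π d v
  π_orth : ∀ d e : ℕ, d ≠ e → ∀ v : R, π d (π e v) = 0
  π_fin : ∀ v : R, (Function.support fun d => π d v).Finite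
  π_sum : ∀ v : R, ∑ᶠ d : ℕ, π d v = v
  mul : R →ₗ[ℂ] R →ₗ[ℂ] R
  one : R
  mul_assoc' : ∀ a b c : R, mul (mul a b) c = mul a (mul b c)
  one_mul' : ∀ a : R, mul one a = a
  mul_one' : ∀ a : R, mul a one = a
  B : R → R → ℂ
  B_add_left : ∀ a a' b : R, B (a + a') b = B a b + B a' b
  B_smul_left : ∀ (c : ℂ) (a b : R), B (c • a) b = c * B a b
  B_conj : ∀ a b : R, B b a = (starRingEnd ℂ) (B a b)
  B_orth : ∀ j k : ℕ, j ≠ k → ∀ a b : R, π j a = a → π k b = b → B a b = 0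
  B_nondeg : ∀ (d : ℕ) (a : R), π d a = a →
    (∀ b : R, π d b = b → B a b = 0) → a = 0
  σ : R → R
  σ_add : ∀ a b : R, σ (a + b) = σ a + σ b
  σ_smul : ∀ (c : ℂ) (a : R), σ (c • a) = (starRingEnd ℂ c) • σ a
  σ_invol : ∀ a : R, σ (σ a) = a
  σ_grade : ∀ (d : ℕ) (a : R), π d a = a → π d (σ a) = σ a
  filt : ∀ (j k : ℕ) (a b : R), π j a = a → π k b = b →
    ∀ d : ℕ, j + k < d → π d (mul a b) = 0
  adj : ∀ φ a b : R, B (mul φ a) b = B a (mul b (σ φ))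
  cmul : R →ₗ[ℂ] R →ₗ[ℂ] R
  cmul_comm : ∀ a b : R, cmul a b = cmul b a
  cmul_assoc : ∀ a b c : R, cmul (cmul a b) c = cmul a (cmul b c)
  cmul_one : ∀ a : R, cmul a one = a
  cmul_grade : ∀ (j k : ℕ) (a b : R), π j a = a → π k b = b →
    π (j + k) (cmul a b) = cmul a b
  top_term : ∀ (j k : ℕ) (a b : R), π j a = a → π k b = b →
    π (j + k) (mul a b) = cmul a b

namespace GradedStarAlgebra

variable {R : Type*} [AddCommGroup R] [Module ℂ R] (S : GradedStarAlgebra R)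

lemma B_zero_left (b : R) : S.B 0 b = 0 := by
  simpa using S.B_smul_left 0 0 b

lemma B_zero_right (a : R) : S.B a 0 = 0 := by
  rw [S.B_conj, B_zero_left, map_zero]

lemma eq_sum_π_of_support_subset (v : R) (s : Finset ℕ)
    (hs : ∀ d, S.π d v ≠ 0 → d ∈ s) : v = ∑ d ∈ s, S.π d v := by
  conv_lhs => rw [← S.π_sum v]
  exact finsum_eq_finsetSum_of_support_subset _ fun d hd => hs d hd

lemma B_π_left {d : ℕ} {ψ : R} (hψ : S.π d ψ = ψ) (w : R) :
    S.B (S.π d w) ψ = S.B w ψ := by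
  let Bψ : R →+ ℂ := AddMonoidHom.mk' (S.B · ψ) fun a b => S.B_add_left a b ψ
  conv_rhs => rw [← S.π_sum w]
  change _ = Bψ (∑ᶠ j, S.π j w)
  rw [Bψ.map_finsum (S.π_fin w), finsum_eq_single (Bψ <| S.π · w) d fun j hj =>
    S.B_orth j d hj _ _ (S.π_idem j w) hψ]
  rfl

lemma B_π_right {d : ℕ} {a : R} (ha : S.π d a = a) (w : R) :
    S.B a (S.π d w) = S.B a w := by
  rw [S.B_conj, S.B_π_left ha, ← S.B_conj]

variable {S} {j k : ℕ} {μ φ : R} (hμ : S.π j μ = μ) (hφ : S.π k φ = φ)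
include hφ

lemma B_π_mul {d : ℕ} {ψ : R} (hψ : S.π d ψ = ψ) :
    S.B (S.π d (S.mul μ φ)) ψ = S.B φ (S.π k (S.mul ψ (S.σ μ))) := by
  rw [S.B_π_left hψ, S.adj, S.B_π_right hφ]

include hμ

lemma π_mul_eq_zero_of_add_lt {d : ℕ} (hd : d + j < k) : S.π d (S.mul μ φ) = 0 :=
  S.B_nondeg d _ (S.π_idem d _) fun ψ hψ => by
    rw [B_π_mul hφ hψ, S.filt d j ψ (S.σ μ) hψ (S.σ_grade j μ hμ) k hd, B_zero_right]

lemma B_π_mul_eq_B_cmul {d : ℕ} (hdk : d + j = k) {ψ : R} (hψ : S.π d ψ = ψ) :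
    S.B (S.π d (S.mul μ φ)) ψ = S.B φ (S.cmul (S.σ μ) ψ) := by
  rw [B_π_mul hφ hψ, ← hdk, S.top_term d j ψ (S.σ μ) hψ (S.σ_grade j μ hμ), S.cmul_comm]

end GradedStarAlgebra

open GradedStarAlgebra in
/-- For `μ ∈ R^1` and `φ ∈ R^k`: (i) `π d (μ ∘ φ) = 0` unless `d ∈ {k-1, k, k+1}`;
(ii) `π (k+1) (μ ∘ φ) = μ · φ`; (iii) the component `Λ_μ(φ) = π (k-1) (μ ∘ φ)`
satisfies `⟨Λ_μ(φ), ψ⟩ = ⟨φ, σ(μ)·ψ⟩` for all `ψ ∈ R^{k-1}`; in particular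
`μ ∘ φ = μ·φ + π k (μ ∘ φ) + Λ_μ(φ)` is a three-term sum, with `Λ_μ` the adjoint
of multiplication by `σ μ`. -/
theorem stmt_4 (R : Type*) [AddCommGroup R] [Module ℂ R] (S : GradedStarAlgebra R)
    (μ : R) (hμ : S.π 1 μ = μ) (k : ℕ) (φ : R) (hφ : S.π k φ = φ) :
    (∀ d : ℕ, S.π d (S.mul μ φ) ≠ 0 → (d + 1 = k ∨ d = k ∨ d = k + 1)) ∧
    (S.π (k + 1) (S.mul μ φ) = S.cmul μ φ) ∧
    (∀ d : ℕ, d + 1 = k → ∀ ψ : R, S.π d ψ = ψ →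
      S.B (S.π d (S.mul μ φ)) ψ = S.B φ (S.cmul (S.σ μ) ψ)) ∧
    (∀ d : ℕ, d + 1 = k →
      S.mul μ φ = S.cmul μ φ + S.π k (S.mul μ φ) + S.π d (S.mul μ φ)) := by
  have support : ∀ d : ℕ, S.π d (S.mul μ φ) ≠ 0 → (d + 1 = k ∨ d = k ∨ d = k + 1) := by
    intro d hd
    by_contra! h
    rcases Nat.lt_or_gt_of_ne h.2.2 with hlt | hgt
    · exact hd (π_mul_eq_zero_of_add_lt hμ hφ (by omega))
    · exact hd (S.filt 1 k μ φ hμ hφ d (by omega))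
  have top : S.π (k + 1) (S.mul μ φ) = S.cmul μ φ := by
    rw [add_comm, S.top_term 1 k μ φ hμ hφ]
  refine ⟨support, top, fun d hdk ψ => B_π_mul_eq_B_cmul hμ hφ hdk, fun d hdk => ?_⟩
  conv_lhs => rw [S.eq_sum_π_of_support_subset (S.mul μ φ) {d, k, k + 1} fun e he => by
    simp only [Finset.mem_insert, Finset.mem_singleton]; have := support e he; omega]
  rw [Finset.sum_insert (by simp; omega), Finset.sum_pair (by omega), top]
  abel
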